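/- arXiv:1305.6735 — 2 statements merged into one kernel-verified Lean document; each statement's English description precedes it below -/
import Mathlib

section
/- Let n ∈ ℕ, m ∈ ℤ with 0 ≤ m ≤ n − 2, and 0 ≤ α < 1, and suppose m + n is even. Then with x = m + α, D_n(x) = Σ_{i=0}^{m+1} b_i · B(n−i−1, m−i+1), where b_i = (1−α)^i/(2−α)^{i+1} for 0 ≤ i < m, b_m = α·((1−α)/(2−α))^m, and b_{m+1} = (1−α)·((1−α)/(2−α))^m. -/
open Classical in
/-- The recursively defined functions `D n : ℝ → ℝ`. -/
noncomputable def D : ℕ → ℝ → ℝ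
  | 0, x => if x ≤ 0 then 1 else 0
  | n + 1, x =>
    if x ≤ 0 then 1
    else if ((n : ℝ) + 1) < x then 0
    else if ∃ m : ℤ, x = (m : ℝ) then
      (1 / 2) * D n (x - 1) + (1 / 2) * D n (x + 1)
    else if Odd n ∧ x < 1 then
      (1 - x) * D n 0 + x * D n 1
    else if Even (⌊x⌋ + (n : ℤ)) then
      (1 / (1 + Int.fract x)) * D n (⌊x⌋ : ℝ)
        + (Int.fract x / (1 + Int.fract x)) * D n (x + 1)
    else
      ((1 - Int.fract x) / (2 - Int.fract x)) * D n (x - 1)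
        + (1 / (2 - Int.fract x)) * D n (⌈x⌉ : ℝ)

/-- `B n k = 2⁻ⁿ ∑_{i=0}^{n-k} C(n, ⌊i/2⌋)`, the normalized sum of the `n - k + 1`
smallest binomial coefficients. -/
noncomputable def B (n : ℕ) (k : ℤ) : ℝ :=
  (2 : ℝ) ^ (-(n : ℤ)) * ∑ i ∈ Finset.range (((n : ℤ) - k).toNat + 1), (n.choose (i / 2) : ℝ)


private def T (n M : ℕ) : ℕ := ∑ i ∈ Finset.range M, n.choose (i / 2)

private lemma T_succ (n M : ℕ) : T n (M+1) = T n M + n.choose (M/2) := by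
  simp [T, Finset.sum_range_succ]

private lemma Trec (n M : ℕ) : T (n+1) M = T n M + T n (M - 2) := by
  induction M with
  | zero => simp [T]
  | succ M ih =>
    rcases M with _ | _ | M
    · simp [T]
    · show T (n+1) 2 = T n 2 + T n 0
      simp [T, Finset.sum_range_succ]
    · have ih' : T (n+1) (M+2) = T n (M+2) + T n M := ih
      have h1 : T (n+1) (M+3) = T (n+1) (M+2) + (n+1).choose ((M+2)/2) :=
        T_succ (n+1) (M+2)
      have h2 : T n (M+3) = T n (M+2) + n.choose ((M+2)/2) := T_succ n (M+2)
      have h3 : T n (M+1) = T n M + n.choose (M/2) := T_succ n M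
      have hp : (n+1).choose ((M+2)/2) = n.choose (M/2) + n.choose ((M+2)/2) := by
        have hd : (M+2)/2 = M/2 + 1 := by omega
        rw [hd]
        exact Nat.choose_succ_succ n (M/2)
      show T (n+1) (M+3) = T n (M+3) + T n (M+1)
      omega

private lemma Teven : ∀ k, T (2*k) (2*k+1) = 4^k := by
  intro k
  induction k with
  | zero => simp [T]
  | succ k ih =>
    rcases k with _ | j
    · show T 2 3 = 4
      simp [T, Finset.sum_range_succ]
    · have ih' : T (2*j+2) (2*j+3) = 4^(j+1) := ih
      have A1 : T (2*j+4) (2*j+5) = T (2*j+3) (2*j+5) + T (2*j+3) (2*j+3) :=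
        Trec (2*j+3) (2*j+5)
      have A2 : T (2*j+3) (2*j+5) = T (2*j+2) (2*j+5) + T (2*j+2) (2*j+3) :=
        Trec (2*j+2) (2*j+5)
      have A3 : T (2*j+3) (2*j+3) = T (2*j+2) (2*j+3) + T (2*j+2) (2*j+1) :=
        Trec (2*j+2) (2*j+3)
      have b2 : T (2*j+2) (2*j+4) = T (2*j+2) (2*j+3) + (2*j+2).choose ((2*j+3)/2) :=
        T_succ (2*j+2) (2*j+3)
      have b3 : T (2*j+2) (2*j+5) = T (2*j+2) (2*j+4) + (2*j+2).choose ((2*j+4)/2) :=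
        T_succ (2*j+2) (2*j+4)
      have b4 : T (2*j+2) (2*j+2) = T (2*j+2) (2*j+1) + (2*j+2).choose ((2*j+1)/2) :=
        T_succ (2*j+2) (2*j+1)
      have b5 : T (2*j+2) (2*j+3) = T (2*j+2) (2*j+2) + (2*j+2).choose ((2*j+2)/2) :=
        T_succ (2*j+2) (2*j+2)
      have d1 : (2*j+3)/2 = j+1 := by omega
      have d2 : (2*j+4)/2 = j+2 := by omega
      have d3 : (2*j+1)/2 = j := by omega
      have d4 : (2*j+2)/2 = j+1 := by omega
      rw [d1] at b2; rw [d2] at b3; rw [d3] at b4; rw [d4] at b5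
      have A6 : (2*j+2).choose (j+2) = (2*j+2).choose j := by
        have h := Nat.choose_symm (show j+2 ≤ 2*j+2 by omega)
        have e : 2*j+2-(j+2) = j := by omega
        rw [e] at h
        exact h.symm
      show T (2*j+4) (2*j+5) = 4^(j+2)
      have key : T (2*j+4) (2*j+5) = 4 * T (2*j+2) (2*j+3) := by omega
      rw [key, ih']
      ring

private lemma B_nat (n k : ℕ) : B n (k : ℤ) = (2:ℝ)^(-(n:ℤ)) * (T n (n - k + 1) : ℝ) := by
  have h : ((n:ℤ) - (k:ℤ)).toNat = n - k := by omega
  rw [B, h, T]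
  push_cast
  ring

private lemma B_zero (n : ℕ) (h : Even n) : B n (0 : ℤ) = 1 := by
  obtain ⟨c, hc⟩ := h
  have hn : n = 2 * c := by omega
  have hT : T n (n - 0 + 1) = 4 ^ c := by
    have h2 : n - 0 + 1 = 2*c + 1 := by omega
    rw [h2, hn]
    exact Teven c
  have hB := B_nat n 0
  rw [Nat.cast_zero] at hB
  rw [hB, hT, hn]
  push_cast
  rw [show (4:ℝ) = 2^2 by norm_num, ← pow_mul]
  rw [← zpow_natCast (2:ℝ) (2*c), ← zpow_add₀ (two_ne_zero)]
  norm_num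

private lemma two_zpow_succ (n : ℕ) : (2:ℝ)^(-((n:ℕ)+1:ℤ)) = (1/2) * (2:ℝ)^(-(n:ℤ)) := by
  rw [show (-((n:ℕ)+1:ℤ)) = -(n:ℤ) + (-1) by ring, zpow_add₀ (two_ne_zero)]
  norm_num
  ring

private lemma B_rec (n k : ℕ) (h1 : 1 ≤ k) (h2 : k + 1 ≤ n) :
    B (n+1) (k:ℤ) = (1/2) * B n ((k:ℤ) - 1) + (1/2) * B n ((k:ℤ) + 1) := by
  have e1 : (k:ℤ) - 1 = ((k-1 : ℕ) : ℤ) := by omega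
  have e2 : (k:ℤ) + 1 = ((k+1 : ℕ) : ℤ) := by omega
  rw [e1, e2]
  have hB := B_nat (n+1) k
  rw [hB, B_nat n (k-1), B_nat n (k+1)]
  have key : T (n+1) (n+1-k+1) = T n (n-(k-1)+1) + T n (n-(k+1)+1) := by
    have h := Trec n (n+1-k+1)
    have a1 : n+1-k+1 = n-(k-1)+1 := by omega
    rw [a1] at h
    have a2 : n-(k-1)+1-2 = n-(k+1)+1 := by omega
    rw [a2] at h
    rw [a1]
    exact h
  rw [show (-(((n+1:ℕ)):ℤ)) = -((n:ℕ)+1:ℤ) by push_cast; ring, two_zpow_succ, key]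
  push_cast
  ring

private lemma D_nonpos (n : ℕ) (x : ℝ) (h : x ≤ 0) : D n x = 1 := by
  cases n <;> simp [D, h]

private lemma D_gt (n : ℕ) (x : ℝ) (h : (n:ℝ) < x) : D n x = 0 := by
  cases n with
  | zero =>
    simp only [D]
    rw [if_neg (by norm_num at h; linarith)]
  | succ n =>
    simp only [D]
    have h0 : (0:ℝ) ≤ (n:ℝ) + 1 := by positivity
    push_cast at h
    rw [if_neg (by linarith), if_pos h]

private lemma D_int_rec (n k : ℕ) (h1 : 1 ≤ k) (h2 : k ≤ n + 1) :
    D (n+1) (k:ℝ) = (1/2) * D n ((k:ℝ) - 1) + (1/2) * D n ((k:ℝ) + 1) := by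
  have hk1 : (1:ℝ) ≤ (k:ℝ) := by exact_mod_cast h1
  have hk2 : (k:ℝ) ≤ (n:ℝ) + 1 := by exact_mod_cast h2
  simp only [D]
  rw [if_neg (by linarith), if_neg (by linarith), if_pos ⟨(k:ℤ), by push_cast; ring⟩]

private lemma Dint : ∀ n k : ℕ, k ≤ n → Even (k + n) → D n (k:ℝ) = B n (k:ℤ) := by
  intro n
  induction n with
  | zero =>
    intro k hk _
    interval_cases k
    rw [Nat.cast_zero, Nat.cast_zero, D_nonpos 0 _ le_rfl, B_zero 0 (by simp)]
  | succ n ih =>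
    intro k hk he
    rcases Nat.eq_zero_or_pos k with rfl | hk1
    · rw [Nat.cast_zero, Nat.cast_zero, D_nonpos _ _ le_rfl,
        B_zero (n+1) (by simpa using he)]
    rcases eq_or_lt_of_le hk with rfl | hklt
    · -- k = n + 1
      rw [D_int_rec n (n+1) (by omega) le_rfl]
      have e1 : ((n+1 : ℕ):ℝ) - 1 = ((n:ℕ) : ℝ) := by push_cast; ring
      have e2 : ((n+1 : ℕ):ℝ) + 1 = ((n+2 : ℕ) : ℝ) := by push_cast; ring
      rw [e1, e2, D_gt n ((n+2:ℕ):ℝ) (by push_cast; linarith)]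
      have hDn : D n ((n:ℕ):ℝ) = B n ((n:ℕ):ℤ) := ih n le_rfl ⟨n, by ring⟩
      rw [hDn, B_nat n n, B_nat (n+1) (n+1)]
      have t1 : T n (n - n + 1) = 1 := by
        have : n - n + 1 = 1 := by omega
        rw [this]; simp [T]
      have t2 : T (n+1) (n+1 - (n+1) + 1) = 1 := by
        have : n+1 - (n+1) + 1 = 1 := by omega
        rw [this]; simp [T]
      rw [t1, t2, show (-(((n+1:ℕ)):ℤ)) = -((n:ℕ)+1:ℤ) by push_cast; ring, two_zpow_succ]
      push_cast
      ring
    · -- 1 ≤ k ≤ n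
      have hkn : k < n := by
        rcases eq_or_lt_of_le (Nat.lt_succ_iff.mp hklt) with rfl | h
        · exfalso
          obtain ⟨c, hc⟩ := he
          omega
        · exact h
      rw [D_int_rec n k hk1 (by omega)]
      have e1 : ((k : ℕ):ℝ) - 1 = ((k-1:ℕ) : ℝ) := by
        have : ((k-1:ℕ):ℝ) = (k:ℝ) - 1 := by
          push_cast [Nat.cast_sub hk1]
          ring
        rw [this]
      have e2 : ((k : ℕ):ℝ) + 1 = ((k+1 : ℕ) : ℝ) := by push_cast; ring
      obtain ⟨c, hc⟩ := he
      rw [e1, e2, ih (k-1) (by omega) ⟨c-1, by omega⟩, ih (k+1) (by omega) ⟨c, by omega⟩,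
        B_rec n k hk1 (by omega)]
      have f1 : ((k-1:ℕ):ℤ) = (k:ℤ) - 1 := by omega
      have f2 : ((k+1:ℕ):ℤ) = (k:ℤ) + 1 := by omega
      rw [f1, f2]

private lemma D_fract (N M : ℕ) (α : ℝ) (h0 : 0 ≤ α) (h1 : α < 1)
    (hM : M + 2 ≤ N) (heven : Even (M + N)) :
    D (N+1) ((M:ℝ) + 1 + α) =
      ((1-α)/(2-α)) * D N ((M:ℝ) + α) + (1/(2-α)) * D N ((M:ℝ) + 2) := by
  have hMN : ((M:ℝ)) + 2 ≤ (N:ℝ) := by exact_mod_cast hM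
  have hM0 : (0:ℝ) ≤ (M:ℝ) := by positivity
  simp only [D]
  rw [if_neg (by norm_num; linarith), if_neg (by norm_num; linarith)]
  by_cases hα : α = 0
  · subst hα
    rw [if_pos ⟨(M:ℤ)+1, by push_cast; ring⟩]
    norm_num
    ring_nf
  · have hα0 : 0 < α := lt_of_le_of_ne h0 (Ne.symm hα)
    have hx : (M:ℝ) + 1 + α = (((M:ℤ)+1 : ℤ):ℝ) + α := by push_cast; ring
    rw [hx]
    have hne : ¬∃ m : ℤ, (((M:ℤ)+1 : ℤ):ℝ) + α = (m:ℝ) := by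
      rintro ⟨m, hm⟩
      have hα' : α = ((m - ((M:ℤ)+1) : ℤ) : ℝ) := by push_cast at hm ⊢; linarith
      rw [hα'] at hα0 h1
      have l1 : (0:ℤ) < m - ((M:ℤ)+1) := by exact_mod_cast hα0
      have l2 : m - ((M:ℤ)+1) < 1 := by exact_mod_cast h1
      omega
    have hnodd : ¬(Odd N ∧ (((M:ℤ)+1 : ℤ):ℝ) + α < 1) := by
      rintro ⟨-, hlt⟩
      push_cast at hlt
      linarith
    have hfl : ⌊(((M:ℤ)+1 : ℤ):ℝ) + α⌋ = (M:ℤ)+1 := by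
      rw [Int.floor_intCast_add, Int.floor_eq_zero_iff.mpr ⟨h0, h1⟩, add_zero]
    have hfr : Int.fract ((((M:ℤ)+1 : ℤ):ℝ) + α) = α := by
      rw [Int.fract_intCast_add, Int.fract_eq_self.mpr ⟨h0, h1⟩]
    have hcl : ⌈(((M:ℤ)+1 : ℤ):ℝ) + α⌉ = (M:ℤ)+2 := by
      rw [add_comm, Int.ceil_add_intCast]
      have hc1 : ⌈α⌉ = 1 := Int.ceil_eq_iff.mpr ⟨by push_cast; linarith, by push_cast; linarith⟩
      rw [hc1]
      ring
    have hnev : ¬ Even (⌊(((M:ℤ)+1 : ℤ):ℝ) + α⌋ + (N:ℤ)) := by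
      rw [hfl]
      obtain ⟨c, hc⟩ := heven
      rintro ⟨d, hd⟩
      omega
    rw [if_neg hne, if_neg hnodd, if_neg hnev, hfr, hcl]
    have harg1 : (((M:ℤ)+1 : ℤ):ℝ) + α - 1 = (M:ℝ) + α := by push_cast; ring
    have harg2 : ((((M:ℤ)+2) : ℤ):ℝ) = (M:ℝ) + 2 := by push_cast; ring
    rw [harg1, harg2]

private lemma D_odd (N : ℕ) (α : ℝ) (h0 : 0 < α) (h1 : α < 1) (hodd : Odd N) :
    D (N+1) α = (1-α) * D N 0 + α * D N 1 := by
  have hb1 : ¬(α ≤ 0) := by linarith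
  have hb2 : ¬((N:ℝ) + 1 < α) := by
    have : (0:ℝ) ≤ (N:ℝ) := by positivity
    linarith
  have hb3 : ¬∃ m : ℤ, α = (m:ℝ) := by
    rintro ⟨m, hm⟩
    rw [hm] at h0 h1
    have l1 : (0:ℤ) < m := by exact_mod_cast h0
    have l2 : (m:ℤ) < 1 := by exact_mod_cast h1
    omega
  simp only [D]
  rw [if_neg hb1, if_neg hb2, if_neg hb3, if_pos ⟨hodd, h1⟩]

private lemma aux : ∀ M n : ℕ, ∀ α : ℝ, M + 2 ≤ n → 0 ≤ α → α < 1 → Even (M + n) →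
    D n ((M:ℝ) + α) = ∑ i ∈ Finset.range (M + 2),
        (if (i:ℤ) < (M:ℤ) then (1-α)^i / (2-α)^(i+1)
         else if (i:ℤ) = (M:ℤ) then α * ((1-α)/(2-α))^M
         else (1-α) * ((1-α)/(2-α))^M) * B (n - i - 1) ((M:ℤ) - (i:ℤ) + 1) := by
  intro M
  induction M with
  | zero =>
    intro n α hn h0 h1 he
    rcases n with _ | _ | N
    · omega
    · omega
    have hEvN : Even N := by
      obtain ⟨c, hc⟩ := he
      exact ⟨c - 1, by omega⟩
    have hD1 : D (N+1) (1:ℝ) = B (N+1) (1:ℤ) := by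
      have h := Dint (N+1) 1 (by omega) (by obtain ⟨c, hc⟩ := he; exact ⟨c, by omega⟩)
      push_cast at h
      exact h
    rw [Finset.sum_range_succ, Finset.sum_range_succ, Finset.sum_range_zero]
    norm_num
    rw [B_zero N hEvN]
    by_cases hα : α = 0
    · subst hα
      rw [D_nonpos _ _ (by norm_num)]
      norm_num
    · have hα0 : 0 < α := lt_of_le_of_ne h0 (Ne.symm hα)
      rw [D_odd (N+1) α hα0 h1 (Even.add_one hEvN), D_nonpos (N+1) 0 le_rfl, hD1]
      ring
  | succ M ih =>
    intro n α hn h0 h1 he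
    rcases n with _ | N
    · omega
    have hMN : M + 2 ≤ N := by omega
    have heMN : Even (M + N) := by
      obtain ⟨c, hc⟩ := he
      exact ⟨c - 1, by omega⟩
    have hx : ((M+1:ℕ):ℝ) + α = (M:ℝ) + 1 + α := by push_cast; ring
    rw [hx, D_fract N M α h0 h1 hMN heMN]
    rw [Finset.sum_range_succ']
    have hD2 : D N ((M:ℝ) + 2) = B N ((M:ℤ) + 2) := by
      have h := Dint N (M+2) (by omega) (by obtain ⟨c, hc⟩ := he; exact ⟨c, by omega⟩)
      have e1 : ((M+2:ℕ):ℝ) = (M:ℝ) + 2 := by push_cast; ring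
      have e2 : ((M+2:ℕ):ℤ) = (M:ℤ) + 2 := by push_cast; ring
      rw [e1, e2] at h
      exact h
    rw [hD2, ih N α hMN h0 h1 heMN]
    have h2α : (2 - α) ≠ 0 := by intro h; linarith
    have h1α : (0:ℝ) < 2 - α := by linarith
    have hterm : ∀ i ∈ Finset.range (M + 2),
        (if ((i+1:ℕ):ℤ) < ((M+1:ℕ):ℤ) then (1-α)^(i+1) / (2-α)^(i+1+1)
         else if ((i+1:ℕ):ℤ) = ((M+1:ℕ):ℤ) then α * ((1-α)/(2-α))^(M+1)
         else (1-α) * ((1-α)/(2-α))^(M+1)) * B (N+1 - (i+1) - 1) (((M+1:ℕ):ℤ) - ((i+1:ℕ):ℤ) + 1)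
        = ((1-α)/(2-α)) *
          ((if (i:ℤ) < (M:ℤ) then (1-α)^i / (2-α)^(i+1)
            else if (i:ℤ) = (M:ℤ) then α * ((1-α)/(2-α))^M
            else (1-α) * ((1-α)/(2-α))^M) * B (N - i - 1) ((M:ℤ) - (i:ℤ) + 1)) := by
      intro i hi
      have hBeq : B (N+1 - (i+1) - 1) (((M+1:ℕ):ℤ) - ((i+1:ℕ):ℤ) + 1)
          = B (N - i - 1) ((M:ℤ) - (i:ℤ) + 1) := by
        congr 1
        · omega
        · push_cast; ring
      rw [hBeq]
      have hc1 : (((i+1:ℕ):ℤ) < ((M+1:ℕ):ℤ)) ↔ ((i:ℤ) < (M:ℤ)) := by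
        constructor <;> intro h <;> [omega; omega]
      have hc2 : (((i+1:ℕ):ℤ) = ((M+1:ℕ):ℤ)) ↔ ((i:ℤ) = (M:ℤ)) := by
        constructor <;> intro h <;> [omega; omega]
      by_cases hlt : (i:ℤ) < (M:ℤ)
      · rw [if_pos (hc1.mpr hlt), if_pos hlt]
        field_simp
        ring
      · rw [if_neg (fun h => hlt (hc1.mp h)), if_neg hlt]
        by_cases heq : (i:ℤ) = (M:ℤ)
        · rw [if_pos (hc2.mpr heq), if_pos heq, pow_succ]
          ring
        · rw [if_neg (fun h => heq (hc2.mp h)), if_neg heq, pow_succ]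
          ring
    have hsum : (∑ i ∈ Finset.range (M + 2),
        (if ((i+1:ℕ):ℤ) < ((M+1:ℕ):ℤ) then (1-α)^(i+1) / (2-α)^(i+1+1)
         else if ((i+1:ℕ):ℤ) = ((M+1:ℕ):ℤ) then α * ((1-α)/(2-α))^(M+1)
         else (1-α) * ((1-α)/(2-α))^(M+1)) * B (N+1 - (i+1) - 1) (((M+1:ℕ):ℤ) - ((i+1:ℕ):ℤ) + 1))
        = ((1-α)/(2-α)) * ∑ i ∈ Finset.range (M + 2),
          (if (i:ℤ) < (M:ℤ) then (1-α)^i / (2-α)^(i+1)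
            else if (i:ℤ) = (M:ℤ) then α * ((1-α)/(2-α))^M
            else (1-α) * ((1-α)/(2-α))^M) * B (N - i - 1) ((M:ℤ) - (i:ℤ) + 1) := by
      rw [Finset.mul_sum]
      exact Finset.sum_congr rfl hterm
    have hf0 : (if ((0:ℕ):ℤ) < ((M+1:ℕ):ℤ) then (1-α)^(0:ℕ) / (2-α)^(0+1)
         else if ((0:ℕ):ℤ) = ((M+1:ℕ):ℤ) then α * ((1-α)/(2-α))^(M+1)
         else (1-α) * ((1-α)/(2-α))^(M+1)) * B (N+1 - 0 - 1) (((M+1:ℕ):ℤ) - ((0:ℕ):ℤ) + 1)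
        = (1/(2-α)) * B N ((M:ℤ) + 2) := by
      rw [if_pos (by push_cast; omega)]
      have hBeq : B (N+1 - 0 - 1) (((M+1:ℕ):ℤ) - ((0:ℕ):ℤ) + 1) = B N ((M:ℤ) + 2) := by
        rw [show ((M+1:ℕ):ℤ) - ((0:ℕ):ℤ) + 1 = (M:ℤ) + 2 by push_cast; ring]
        norm_num
      rw [hBeq]
      norm_num
    rw [hsum, hf0]

/-- explicit formula for `D_n(m + α)` when `m + n` is even. -/
theorem D_eq_sum_of_even (n : ℕ) (m : ℤ) (α : ℝ)
    (hm0 : 0 ≤ m) (hmn : m ≤ (n : ℤ) - 2)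
    (hα0 : 0 ≤ α) (hα1 : α < 1)
    (heven : Even (m + (n : ℤ))) :
    D n ((m : ℝ) + α) =
      ∑ i ∈ Finset.range (m.toNat + 2),
        (if (i : ℤ) < m then (1 - α) ^ i / (2 - α) ^ (i + 1)
         else if (i : ℤ) = m then α * ((1 - α) / (2 - α)) ^ m.toNat
         else (1 - α) * ((1 - α) / (2 - α)) ^ m.toNat) *
          B (n - i - 1) (m - (i : ℤ) + 1) := by
  lift m to ℕ using hm0 with M
  have h1 : M + 2 ≤ n := by omega
  have h2 : Even (M + n) := by
    obtain ⟨c, hc⟩ := heven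
    exact ⟨c.toNat, by omega⟩
  simp only [Int.toNat_natCast, Int.cast_natCast]
  exact aux M n α h1 hα0 hα1 h2
end

section
/- For every n ∈ ℕ with n ≥ 1, the function D_n is convex and continuously differentiable on each open interval (a, a+2) with a ∈ ℤ, a ≥ 0, a + 2 ≤ n, and a ≡ n (mod 2), and additionally, if n is odd, D_n is convex and continuously differentiable on the interval (0,1). -/
open Set Filter Topology

/-!
Let `c` be an integer with `c ≡ n (mod 2)`. On `[c, c + 1]` and on `[c - 1, c]` the recursion
reads `D (n + 1) (c ± t) = (D n c + t * D n (c ± (1 + t))) / (1 + t)`, a moving weighted mean of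
`D n` seen from `c` (the one exception, the piece on `[0, 1]` for odd `n`, is affine). If `g` is
convex and `C¹` on `(0, 2)` and `g 0` lies above all its tangent lines, then
`t ↦ (g 0 + t * g (1 + t)) / (1 + t)` is convex and `C¹` on `(0, 1)` with derivative tending to
`g 1 - g 0` at `0`. At `c` the two pieces of `D (n + 1)` take the value `D n c` and have the
one-sided slopes `D n (c + 1) - D n c` and `D n c - D n (c - 1)`, which agree because
`2 * D n c = D n (c - 1) + D n (c + 1)`. Hence `D (n + 1)` is convex and `C¹` across `c`, and
induction on `n` covers every block `(c - 1, c + 1)`.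
-/

lemma monotoneOn_Ioo_of_continuousAt {g : ℝ → ℝ} {p c q : ℝ} (hpc : p < c) (hcq : c < q)
    (hl : MonotoneOn g (Ioo p c)) (hr : MonotoneOn g (Ioo c q)) (hc : ContinuousAt g c) :
    MonotoneOn g (Ioo p q) := by
  have hle : ∀ x ∈ Ioo p c, g x ≤ g c := fun x hx =>
    ge_of_tendsto (hc.tendsto.mono_left nhdsWithin_le_nhds) (by
      filter_upwards [Ioo_mem_nhdsLT hx.2] with y hy
      exact hl hx ⟨hx.1.trans hy.1, hy.2⟩ hy.1.le)
  have hge : ∀ x ∈ Ioo c q, g c ≤ g x := fun x hx =>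
    le_of_tendsto (hc.tendsto.mono_left nhdsWithin_le_nhds) (by
      filter_upwards [Ioo_mem_nhdsGT hx.1] with y hy
      exact hr ⟨hy.1, hy.2.trans hx.2⟩ hx hy.2.le)
  have hl' : MonotoneOn g (Ioc p c) := by
    intro x hx y hy hxy
    rcases hy.2.lt_or_eq with hyc | rfl
    · exact hl ⟨hx.1, hxy.trans_lt hyc⟩ ⟨hy.1, hyc⟩ hxy
    · rcases hx.2.lt_or_eq with hxc | rfl
      exacts [hle x ⟨hx.1, hxc⟩, le_rfl]
  have hr' : MonotoneOn g (Ico c q) := by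
    intro x hx y hy hxy
    rcases hx.1.lt_or_eq with hcx | rfl
    · exact hr ⟨hcx, hx.2⟩ ⟨hcx.trans_le hxy, hy.2⟩ hxy
    · rcases hy.1.lt_or_eq with hcy | rfl
      exacts [hge y ⟨hcy, hy.2⟩, le_rfl]
  rw [← Ioc_union_Ico_eq_Ioo hpc hcq]
  exact hl'.union_right hr' ⟨⟨hpc, le_rfl⟩, fun x hx => hx.2⟩ ⟨⟨le_rfl, hcq⟩, fun x hx => hx.1⟩

structure HasMonotoneContinuousDerivOn (f : ℝ → ℝ) (s : Set ℝ) : Prop where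
  differentiableAt : ∀ x ∈ s, DifferentiableAt ℝ f x
  monotoneOn_deriv : MonotoneOn (deriv f) s
  continuousOn_deriv : ContinuousOn (deriv f) s

namespace HasMonotoneContinuousDerivOn

variable {f g : ℝ → ℝ} {s : Set ℝ}

lemma of_hasDerivAt {f' : ℝ → ℝ} (hf : ∀ x ∈ s, HasDerivAt f (f' x) x)
    (hm : MonotoneOn f' s) (hc : ContinuousOn f' s) : HasMonotoneContinuousDerivOn f s :=
  have hderiv : EqOn f' (deriv f) s := fun x hx => (hf x hx).deriv.symm
  ⟨fun x hx => (hf x hx).differentiableAt, hm.congr hderiv, hc.congr hderiv.symm⟩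

lemma congr (h : HasMonotoneContinuousDerivOn f s) (hs : IsOpen s) (hfg : EqOn f g s) :
    HasMonotoneContinuousDerivOn g s := by
  have hev : ∀ x ∈ s, f =ᶠ[𝓝 x] g := fun x hx => hfg.eventuallyEq_of_mem (hs.mem_nhds hx)
  have hderiv : EqOn (deriv f) (deriv g) s := fun x hx => (hev x hx).deriv_eq
  exact ⟨fun x hx => (h.differentiableAt x hx).congr_of_eventuallyEq (hev x hx).symm,
    h.monotoneOn_deriv.congr hderiv, h.continuousOn_deriv.congr hderiv.symm⟩

lemma comp_sub_const (h : HasMonotoneContinuousDerivOn f s) (a : ℝ) :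
    HasMonotoneContinuousDerivOn (fun x => f (x - a)) ((· - a) ⁻¹' s) := by
  refine of_hasDerivAt (f' := fun x => deriv f (x - a))
    (fun x hx => ((h.differentiableAt _ hx).hasDerivAt).comp_sub_const x a)
    (fun x hx y hy hxy => h.monotoneOn_deriv hx hy (by simpa using hxy)) ?_
  exact h.continuousOn_deriv.comp (continuous_sub_right a).continuousOn fun _ hx => hx

lemma comp_const_add (h : HasMonotoneContinuousDerivOn f s) (a : ℝ) :
    HasMonotoneContinuousDerivOn (fun x => f (a + x)) ((a + ·) ⁻¹' s) := by
  refine of_hasDerivAt (f' := fun x => deriv f (a + x))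
    (fun x hx => ((h.differentiableAt _ hx).hasDerivAt).comp_const_add a x)
    (fun x hx y hy hxy => h.monotoneOn_deriv hx hy (by simpa using hxy)) ?_
  exact h.continuousOn_deriv.comp (continuous_const_add a).continuousOn fun _ hx => hx

lemma comp_const_sub (h : HasMonotoneContinuousDerivOn f s) (a : ℝ) :
    HasMonotoneContinuousDerivOn (fun x => f (a - x)) ((a - ·) ⁻¹' s) := by
  refine of_hasDerivAt (f' := fun x => -deriv f (a - x))
    (fun x hx => ((h.differentiableAt _ hx).hasDerivAt).comp_const_sub a x)
    (fun x hx y hy hxy => neg_le_neg (h.monotoneOn_deriv hy hx (sub_le_sub_left hxy a))) ?_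
  exact (h.continuousOn_deriv.comp (continuous_sub_left a).continuousOn fun _ hx => hx).neg

lemma convexOn (h : HasMonotoneContinuousDerivOn f s) (hconv : Convex ℝ s) (hs : IsOpen s) :
    ConvexOn ℝ s f :=
  MonotoneOn.convexOn_of_deriv hconv
    (fun x hx => (h.differentiableAt x hx).continuousAt.continuousWithinAt)
    (by rw [hs.interior_eq]; exact fun x hx => (h.differentiableAt x hx).differentiableWithinAt)
    (by rw [hs.interior_eq]; exact h.monotoneOn_deriv)

lemma convexOn_Icc {a b : ℝ} (h : HasMonotoneContinuousDerivOn f (Ioo a b))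
    (hc : ContinuousOn f (Icc a b)) : ConvexOn ℝ (Icc a b) f :=
  MonotoneOn.convexOn_of_deriv (convex_Icc a b) hc
    (by rw [interior_Icc]; exact fun x hx => (h.differentiableAt x hx).differentiableWithinAt)
    (by rw [interior_Icc]; exact h.monotoneOn_deriv)

lemma glue {p c q d : ℝ} (hpc : p < c) (hcq : c < q)
    (hl : HasMonotoneContinuousDerivOn f (Ioo p c)) (hr : HasMonotoneContinuousDerivOn f (Ioo c q))
    (hfc : ContinuousAt f c) (hld : Tendsto (deriv f) (𝓝[<] c) (𝓝 d))
    (hrd : Tendsto (deriv f) (𝓝[>] c) (𝓝 d)) :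
    HasMonotoneContinuousDerivOn f (Ioo p q) := by
  have hdc : HasDerivAt f d c := by
    have hleft := hasDerivWithinAt_Iic_of_tendsto_deriv
      (fun x hx => (hl.differentiableAt x hx).differentiableWithinAt)
      hfc.continuousWithinAt (Ioo_mem_nhdsLT hpc) hld
    have hright := hasDerivWithinAt_Ici_of_tendsto_deriv
      (fun x hx => (hr.differentiableAt x hx).differentiableWithinAt)
      hfc.continuousWithinAt (Ioo_mem_nhdsGT hcq) hrd
    simpa using hleft.union hright
  have hcont : ContinuousAt (deriv f) c := by
    rw [continuousAt_iff_continuous_left'_right', ContinuousWithinAt, ContinuousWithinAt,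
      hdc.deriv]
    exact ⟨hld, hrd⟩
  refine ⟨fun x hx => ?_, monotoneOn_Ioo_of_continuousAt hpc hcq hl.monotoneOn_deriv
    hr.monotoneOn_deriv hcont, fun x hx => ContinuousAt.continuousWithinAt ?_⟩
  · rcases lt_trichotomy x c with hxc | rfl | hxc
    · exact hl.differentiableAt x ⟨hx.1, hxc⟩
    · exact hdc.differentiableAt
    · exact hr.differentiableAt x ⟨hxc, hx.2⟩
  · rcases lt_trichotomy x c with hxc | rfl | hxc
    · exact hl.continuousOn_deriv.continuousAt (Ioo_mem_nhds hx.1 hxc)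
    · exact hcont
    · exact hr.continuousOn_deriv.continuousAt (Ioo_mem_nhds hxc hx.2)

end HasMonotoneContinuousDerivOn

noncomputable def chordMean (g : ℝ → ℝ) (t : ℝ) : ℝ := (g 0 + t * g (1 + t)) / (1 + t)

noncomputable def chordMeanDeriv (g : ℝ → ℝ) (t : ℝ) : ℝ :=
  (g (1 + t) - g 0 + t * (1 + t) * deriv g (1 + t)) / (1 + t) ^ 2

structure IsChordProfile (g : ℝ → ℝ) : Prop where
  hasMonotoneContinuousDerivOn : HasMonotoneContinuousDerivOn g (Ioo 0 2)
  continuousOn : ContinuousOn g (Icc 1 2)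
  /-- Weaker than continuity at `0`: `g` may jump up there, as `D n` does at `n`. -/
  sub_mul_deriv_le : ∀ u ∈ Ioo (0 : ℝ) 2, g u - u * deriv g u ≤ g 0

structure IsConvexPiece (φ : ℝ → ℝ) (d : ℝ) : Prop where
  hasMonotoneContinuousDerivOn : HasMonotoneContinuousDerivOn φ (Ioo 0 1)
  continuousOn : ContinuousOn φ (Icc 0 1)
  tendsto_deriv : Tendsto (deriv φ) (𝓝[>] 0) (𝓝 d)

section chordMean

variable {g : ℝ → ℝ}

lemma hasDerivAt_chordMean {t : ℝ} (ht : -1 < t) (hg : DifferentiableAt ℝ g (1 + t)) :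
    HasDerivAt (chordMean g) (chordMeanDeriv g t) t := by
  have hne : 1 + t ≠ 0 := by linarith
  have h : HasDerivAt (fun t => (g 0 + t * g (1 + t)) / (1 + t))
      (((1 * g (1 + t) + t * deriv g (1 + t)) * (1 + t) - (g 0 + t * g (1 + t)) * 1)
        / (1 + t) ^ 2) t :=
    (((hasDerivAt_id' t).mul (hg.hasDerivAt.comp_const_add 1 t)).const_add (g 0)).div
      ((hasDerivAt_id' t).const_add 1) hne
  exact h.congr_deriv (by rw [chordMeanDeriv]; ring)

lemma IsChordProfile.monotoneOn_chordMeanDeriv (hg : IsChordProfile g) :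
    MonotoneOn (chordMeanDeriv g) (Ioo 0 1) := by
  intro p hp q hq hpq
  obtain ⟨hdiff, hmono, -⟩ := hg.hasMonotoneContinuousDerivOn
  set u := 1 + p
  set v := 1 + q
  have hu : u ∈ Ioo (0 : ℝ) 2 := ⟨by linarith [hp.1], by linarith [hp.2]⟩
  have hv : v ∈ Ioo (0 : ℝ) 2 := ⟨by linarith [hq.1], by linarith [hq.2]⟩
  have huv : u ≤ v := by linarith
  have hsecant : deriv g u * (v - u) ≤ g v - g u := by
    rcases huv.lt_or_eq with huv | huv
    · have := (hg.hasMonotoneContinuousDerivOn.convexOn (convex_Ioo 0 2) isOpen_Ioo).deriv_le_slope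
        hu hv huv (hdiff u hu)
      rw [slope_def_field, le_div_iff₀ (by linarith)] at this
      exact this
    · rw [huv]; simp
  have htangent := hg.sub_mul_deriv_le u hu
  have hderiv := hmono hu hv huv
  have hu1 : 1 ≤ u := by linarith [hp.1]
  simp only [chordMeanDeriv]
  rw [div_le_div_iff₀ (pow_pos (by linarith) 2) (pow_pos (by linarith) 2)]
  -- The summands are nonnegative by the secant inequality, the tangent condition at `0` and the
  -- monotonicity of `deriv g`.
  have key : (g v - g 0 + q * v * deriv g v) * u ^ 2 - (g u - g 0 + p * u * deriv g u) * v ^ 2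
      = u ^ 2 * (g v - g u - deriv g u * (v - u)) + (v ^ 2 - u ^ 2) * (g 0 - g u + u * deriv g u)
        + u ^ 2 * v * q * (deriv g v - deriv g u) := by
    simp only [u, v]; ring
  nlinarith [mul_nonneg (sq_nonneg u) (sub_nonneg.2 hsecant),
    mul_nonneg (by nlinarith : (0 : ℝ) ≤ v ^ 2 - u ^ 2)
      (by linarith : (0 : ℝ) ≤ g 0 - g u + u * deriv g u),
    mul_nonneg (mul_nonneg (mul_nonneg (sq_nonneg u) (by linarith : (0 : ℝ) ≤ v)) hq.1.le)
      (sub_nonneg.2 hderiv)]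

lemma HasMonotoneContinuousDerivOn.continuousOn_chordMeanDeriv
    (hg : HasMonotoneContinuousDerivOn g (Ioo 0 2)) :
    ContinuousOn (chordMeanDeriv g) (Ico 0 1) := by
  have hmaps : MapsTo (fun t : ℝ => 1 + t) (Ico 0 1) (Ioo 0 2) :=
    fun t ht => ⟨by linarith [ht.1], by linarith [ht.2]⟩
  have hshift := (continuous_const_add (1 : ℝ)).continuousOn (s := Ico 0 1)
  have hgc : ContinuousOn g (Ioo 0 2) := fun x hx =>
    (hg.differentiableAt x hx).continuousAt.continuousWithinAt
  refine ContinuousOn.div ?_ (hshift.pow 2) fun t ht => pow_ne_zero 2 (by linarith [ht.1])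
  exact ((hgc.comp hshift hmaps).sub continuousOn_const).add
    ((continuousOn_id.mul hshift).mul (hg.continuousOn_deriv.comp hshift hmaps))

lemma continuousOn_chordMean (hg : ContinuousOn g (Icc 1 2)) :
    ContinuousOn (chordMean g) (Icc 0 1) := by
  have hshift := (continuous_const_add (1 : ℝ)).continuousOn (s := Icc 0 1)
  refine ContinuousOn.div ?_ hshift fun t ht => by linarith [ht.1]
  exact continuousOn_const.add (continuousOn_id.mul
    (hg.comp hshift fun t ht => ⟨by linarith [ht.1], by linarith [ht.2]⟩))

theorem IsChordProfile.isConvexPiece_chordMean (hg : IsChordProfile g) :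
    IsConvexPiece (chordMean g) (g 1 - g 0) := by
  have hderiv : ∀ t ∈ Ioo (-1 : ℝ) 1, HasDerivAt (chordMean g) (chordMeanDeriv g t) t :=
    fun t ht => hasDerivAt_chordMean ht.1 (hg.hasMonotoneContinuousDerivOn.differentiableAt _
      ⟨by linarith [ht.1], by linarith [ht.2]⟩)
  have hcont := hg.hasMonotoneContinuousDerivOn.continuousOn_chordMeanDeriv
  refine ⟨.of_hasDerivAt (fun t ht => hderiv t ⟨by linarith [ht.1], ht.2⟩)
    hg.monotoneOn_chordMeanDeriv (hcont.mono Ioo_subset_Ico_self),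
    continuousOn_chordMean hg.continuousOn, ?_⟩
  have hlim : Tendsto (chordMeanDeriv g) (𝓝[>] 0) (𝓝 (g 1 - g 0)) := by
    have := ((hcont 0 ⟨le_rfl, one_pos⟩).mono Ioo_subset_Ico_self).tendsto
    rw [nhdsWithin_Ioo_eq_nhdsGT one_pos] at this
    simpa [chordMeanDeriv] using this
  refine hlim.congr' ?_
  filter_upwards [Ioo_mem_nhdsGT one_pos] with t ht
  exact (hderiv t ⟨by linarith [ht.1], ht.2⟩).deriv.symm

lemma IsChordProfile.of_continuousOn (hg : HasMonotoneContinuousDerivOn g (Ioo 0 2))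
    (hc : ContinuousOn g (Icc 0 2)) : IsChordProfile g := by
  refine ⟨hg, hc.mono (Icc_subset_Icc_left zero_le_one), fun u hu => ?_⟩
  have := (hg.convexOn_Icc hc).slope_le_deriv (left_mem_Icc.2 zero_le_two)
    (Ioo_subset_Icc_self hu) hu.1 (hg.differentiableAt u hu)
  rw [slope_def_field, sub_zero, div_le_iff₀ hu.1] at this
  linarith

lemma IsChordProfile.of_eqOn_zero (h0 : 0 ≤ g 0) (hg : EqOn g 0 (Ioc 0 2)) :
    IsChordProfile g := by
  have hconst : HasMonotoneContinuousDerivOn (fun _ => (0 : ℝ)) (Ioo 0 2) :=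
    .of_hasDerivAt (fun x _ => hasDerivAt_const x 0) monotoneOn_const continuousOn_const
  have hg' : EqOn (fun _ => (0 : ℝ)) g (Ioo 0 2) := fun x hx => (hg (Ioo_subset_Ioc_self hx)).symm
  refine ⟨hconst.congr isOpen_Ioo hg', continuousOn_const.congr
    fun x hx => hg ⟨by linarith [hx.1], hx.2⟩, fun u hu => ?_⟩
  have hev : (fun _ => (0 : ℝ)) =ᶠ[𝓝 u] g := hg'.eventuallyEq_of_mem (isOpen_Ioo.mem_nhds hu)
  rw [← hev.deriv_eq, ← hg' hu]
  simpa using h0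

end chordMean

namespace IsConvexPiece

variable {f φ : ℝ → ℝ} {c d : ℝ}

lemma affine (a b : ℝ) : IsConvexPiece (fun t => a + t * b) b := by
  have hderiv : ∀ t, HasDerivAt (fun t => a + t * b) b t := fun t => by
    simpa using ((hasDerivAt_id' t).mul_const b).const_add a
  refine ⟨.of_hasDerivAt (fun t _ => hderiv t) monotoneOn_const continuousOn_const,
    by fun_prop, ?_⟩
  rw [funext fun t => (hderiv t).deriv]
  exact tendsto_const_nhds

lemma right (hφ : IsConvexPiece φ d) (hf : ∀ t ∈ Icc (0 : ℝ) 1, f (c + t) = φ t) :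
    ContinuousOn f (Icc c (c + 1)) ∧ HasMonotoneContinuousDerivOn f (Ioo c (c + 1)) ∧
      Tendsto (deriv f) (𝓝[>] c) (𝓝 d) := by
  have heq : EqOn (fun x => φ (x - c)) f (Icc c (c + 1)) := fun x hx => by
    simpa using (hf (x - c) ⟨by linarith [hx.1], by linarith [hx.2]⟩).symm
  have hpre : (· - c) ⁻¹' Ioo (0 : ℝ) 1 = Ioo c (c + 1) := by simp [add_comm]
  have hderiv : EqOn (fun x => deriv φ (x - c)) (deriv f) (Ioo c (c + 1)) := fun x hx => by
    dsimp only
    rw [← deriv_comp_sub_const]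
    exact ((heq.mono Ioo_subset_Icc_self).eventuallyEq_of_mem (isOpen_Ioo.mem_nhds hx)).deriv_eq
  have hshift : Tendsto (· - c) (𝓝[>] c) (𝓝[>] 0) := by
    have h := Filter.map_subRight_nhdsGT (c := c) (a := c)
    rw [sub_self] at h
    exact h.le
  refine ⟨(hφ.continuousOn.comp (continuous_sub_right c).continuousOn fun x hx =>
      ⟨by linarith [hx.1], by linarith [hx.2]⟩).congr heq.symm,
    hpre ▸ (hφ.hasMonotoneContinuousDerivOn.comp_sub_const c).congr (hpre ▸ isOpen_Ioo)
      (hpre ▸ heq.mono Ioo_subset_Icc_self), ?_⟩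
  refine (hφ.tendsto_deriv.comp hshift).congr' ?_
  filter_upwards [Ioo_mem_nhdsGT (show c < c + 1 by linarith)] with x hx using hderiv hx

lemma left (hφ : IsConvexPiece φ d) (hf : ∀ t ∈ Icc (0 : ℝ) 1, f (c - t) = φ t) :
    ContinuousOn f (Icc (c - 1) c) ∧ HasMonotoneContinuousDerivOn f (Ioo (c - 1) c) ∧
      Tendsto (deriv f) (𝓝[<] c) (𝓝 (-d)) := by
  have heq : EqOn (fun x => φ (c - x)) f (Icc (c - 1) c) := fun x hx => by
    simpa using (hf (c - x) ⟨by linarith [hx.2], by linarith [hx.1]⟩).symm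
  have hpre : (c - ·) ⁻¹' Ioo (0 : ℝ) 1 = Ioo (c - 1) c := by simp
  have hderiv : EqOn (fun x => -deriv φ (c - x)) (deriv f) (Ioo (c - 1) c) := fun x hx => by
    dsimp only
    rw [← deriv_comp_const_sub]
    exact ((heq.mono Ioo_subset_Icc_self).eventuallyEq_of_mem (isOpen_Ioo.mem_nhds hx)).deriv_eq
  have hshift : Tendsto (c - ·) (𝓝[<] c) (𝓝[>] 0) := by
    have h := Filter.map_subLeft_nhdsLT (c := c) (a := c)
    rw [sub_self] at h
    exact h.le
  refine ⟨(hφ.continuousOn.comp (continuous_sub_left c).continuousOn fun x hx =>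
      ⟨by linarith [hx.2], by linarith [hx.1]⟩).congr heq.symm,
    hpre ▸ (hφ.hasMonotoneContinuousDerivOn.comp_const_sub c).congr (hpre ▸ isOpen_Ioo)
      (hpre ▸ heq.mono Ioo_subset_Icc_self), ?_⟩
  refine (hφ.tendsto_deriv.comp hshift).neg.congr' ?_
  filter_upwards [Ioo_mem_nhdsLT (show c - 1 < c by linarith)] with x hx using hderiv hx

theorem glue {ψ : ℝ → ℝ} (hφ : IsConvexPiece φ d) (hψ : IsConvexPiece ψ (-d))
    (hfφ : ∀ t ∈ Icc (0 : ℝ) 1, f (c + t) = φ t) (hfψ : ∀ t ∈ Icc (0 : ℝ) 1, f (c - t) = ψ t) :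
    ContinuousOn f (Icc (c - 1) (c + 1)) ∧
      HasMonotoneContinuousDerivOn f (Ioo (c - 1) (c + 1)) := by
  obtain ⟨hcr, hdr, hlimr⟩ := hφ.right hfφ
  obtain ⟨hcl, hdl, hliml⟩ := hψ.left hfψ
  have hcont : ContinuousOn f (Icc (c - 1) (c + 1)) := by
    rw [← Icc_union_Icc_eq_Icc (by linarith) (by linarith)]
    exact hcl.union_of_isClosed hcr isClosed_Icc isClosed_Icc
  refine ⟨hcont, hdl.glue (by linarith) (by linarith) hdr
    (hcont.continuousAt (Icc_mem_nhds (by linarith) (by linarith))) ?_ hlimr⟩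
  simpa using hliml

end IsConvexPiece

lemma D_of_nonpos (n : ℕ) {x : ℝ} (hx : x ≤ 0) : D n x = 1 := by
  cases n <;> simp [D, hx]

lemma D_of_lt (n : ℕ) {x : ℝ} (hx : (n : ℝ) < x) : D n x = 0 := by
  cases n with
  | zero => simpa [D] using hx
  | succ n =>
    have hx0 : ¬x ≤ 0 := by push_cast at hx; linarith [(n.cast_nonneg : (0 : ℝ) ≤ n)]
    rw [D, if_neg hx0, if_pos (by exact_mod_cast hx)]

lemma D_succ_intCast (n : ℕ) {m : ℤ} (hm : 1 ≤ m) :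
    D (n + 1) m = (D n (m - 1) + D n (m + 1)) / 2 := by
  have hm' : (1 : ℝ) ≤ m := by exact_mod_cast hm
  by_cases hmn : (m : ℝ) ≤ n + 1
  · rw [D, if_neg (by linarith), if_neg (not_lt.2 hmn), if_pos ⟨m, rfl⟩]
    ring
  · rw [D_of_lt (n + 1) (by push_cast; linarith), D_of_lt n (by linarith), D_of_lt n (by linarith)]
    ring

lemma D_natCast_self_nonneg (n : ℕ) : 0 ≤ D n n := by
  induction n with
  | zero => simp [D]
  | succ n ih =>
    have h := D_succ_intCast n (m := n + 1) (by omega)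
    push_cast at h ⊢
    rw [h, add_sub_cancel_right, D_of_lt n (x := n + 1 + 1) (by linarith)]
    linarith

lemma two_mul_D_intCast (n : ℕ) {m : ℤ} (hm : 1 ≤ m) (hpar : m % 2 = n % 2) :
    2 * D n m = D n (m - 1) + D n (m + 1) := by
  induction n generalizing m with
  | zero =>
    have hm' : (2 : ℝ) ≤ m := by exact_mod_cast (show 2 ≤ m by omega)
    rw [D_of_lt 0 (by push_cast; linarith), D_of_lt 0 (by push_cast; linarith),
      D_of_lt 0 (by push_cast; linarith)]
    ring
  | succ n ih =>
    have h0 := D_succ_intCast n hm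
    have h1 := D_succ_intCast n (m := m + 1) (by omega)
    have i1 := ih (m := m + 1) (by omega) (by push_cast at hpar; omega)
    push_cast at h1 i1
    rcases eq_or_lt_of_le hm with rfl | hm2
    · rw [Int.cast_one, sub_self, D_of_nonpos _ le_rfl] at h0 ⊢
      norm_num at h1 i1 ⊢
      linarith
    · have h2 := D_succ_intCast n (m := m - 1) (by omega)
      have i2 := ih (m := m - 1) (by omega) (by push_cast at hpar; omega)
      push_cast at h2 i2
      ring_nf at h0 h1 h2 i1 i2 ⊢
      linarith

lemma D_succ_intCast_of_parity (n : ℕ) {m : ℤ} (hm : 1 ≤ m) (hpar : m % 2 = n % 2) :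
    D (n + 1) m = D n m := by
  rw [D_succ_intCast n hm]
  linarith [two_mul_D_intCast n hm hpar]

lemma D_succ_add_of_mem_Ioo (n : ℕ) {c : ℤ} (hc : 0 ≤ c) (hcn : c ≤ n) (hpar : c % 2 = n % 2)
    {t : ℝ} (ht : t ∈ Ioo 0 1) :
    D (n + 1) (c + t) = (D n c + t * D n (c + (1 + t))) / (1 + t) := by
  have hfloor : ⌊(c : ℝ) + t⌋ = c := by
    rw [Int.floor_intCast_add, Int.floor_eq_zero_iff.2 ⟨ht.1.le, ht.2⟩, add_zero]
  have hfract : Int.fract ((c : ℝ) + t) = t := by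
    rw [Int.fract_intCast_add, Int.fract_eq_self.2 ⟨ht.1.le, ht.2⟩]
  have hc' : (0 : ℝ) ≤ c := by exact_mod_cast hc
  have hcn' : (c : ℝ) ≤ n := by exact_mod_cast hcn
  have hnotint : ¬∃ m : ℤ, (c : ℝ) + t = m := by
    rintro ⟨m, hm⟩
    have := Int.fract_intCast (R := ℝ) m
    rw [← hm, hfract] at this
    linarith [ht.1]
  have hodd : ¬(Odd n ∧ (c : ℝ) + t < 1) := by
    rintro ⟨⟨k, hk⟩, hlt⟩
    have : (1 : ℝ) ≤ c := by exact_mod_cast (show 1 ≤ c by omega)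
    linarith [ht.1]
  rw [D, if_neg (by linarith [ht.1]), if_neg (by linarith [ht.2]), if_neg hnotint, if_neg hodd,
    if_pos (by rw [hfloor, Int.even_iff]; omega), hfloor, hfract,
    show (c : ℝ) + (1 + t) = c + t + 1 by ring]
  field_simp

lemma D_succ_sub_of_mem_Ioo (n : ℕ) {c : ℤ} (hc : 2 ≤ c) (hcn : c ≤ n) (hpar : c % 2 = n % 2)
    {t : ℝ} (ht : t ∈ Ioo 0 1) :
    D (n + 1) (c - t) = (D n c + t * D n (c - (1 + t))) / (1 + t) := by
  have hx : (c : ℝ) - t = ((c - 1 : ℤ) : ℝ) + (1 - t) := by push_cast; ring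
  have hfloor : ⌊(c : ℝ) - t⌋ = c - 1 := by
    rw [hx, Int.floor_intCast_add, Int.floor_eq_zero_iff.2 ⟨by linarith [ht.2], by linarith [ht.1]⟩,
      add_zero]
  have hfract : Int.fract ((c : ℝ) - t) = 1 - t := by
    rw [hx, Int.fract_intCast_add, Int.fract_eq_self.2 ⟨by linarith [ht.2], by linarith [ht.1]⟩]
  have hceil : ⌈(c : ℝ) - t⌉ = c := Int.ceil_eq_iff.2 ⟨by linarith [ht.2], by linarith [ht.1]⟩
  have hc' : (2 : ℝ) ≤ c := by exact_mod_cast hc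
  have hcn' : (c : ℝ) ≤ n := by exact_mod_cast hcn
  have hnotint : ¬∃ m : ℤ, (c : ℝ) - t = m := by
    rintro ⟨m, hm⟩
    have := Int.fract_intCast (R := ℝ) m
    rw [← hm, hfract] at this
    linarith [ht.2]
  rw [D, if_neg (by linarith [ht.2]), if_neg (by linarith [ht.1]), if_neg hnotint,
    if_neg (fun h => by linarith [h.2, ht.2]), if_neg (by rw [hfloor, Int.even_iff]; omega),
    hfract, hceil, show (c : ℝ) - (1 + t) = c - t - 1 by ring]
  field_simp
  ring

lemma D_succ_one_sub_of_mem_Ioo {n : ℕ} (hn : Odd n) {t : ℝ} (ht : t ∈ Ioo 0 1) :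
    D (n + 1) (1 - t) = D n 1 + t * (1 - D n 1) := by
  have hnotint : ¬∃ m : ℤ, 1 - t = (m : ℝ) := by
    rintro ⟨m, hm⟩
    have h0 : (0 : ℝ) < m := by linarith [ht.2]
    have h1 : (m : ℝ) < 1 := by linarith [ht.1]
    norm_cast at h0 h1
    omega
  rw [D, if_neg (by linarith [ht.2]), if_neg (by linarith [ht.1, (n.cast_nonneg : (0 : ℝ) ≤ n)]),
    if_neg hnotint, if_pos ⟨hn, by linarith [ht.1]⟩, D_of_nonpos n le_rfl]
  ring

lemma D_succ_add_eq_chordMean (n : ℕ) {c : ℤ} (hc : 0 ≤ c) (hcn : c ≤ n) (hpar : c % 2 = n % 2)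
    {t : ℝ} (ht : t ∈ Icc 0 1) : D (n + 1) (c + t) = chordMean (fun s => D n (c + s)) t := by
  simp only [chordMean, add_zero]
  rcases eq_endpoints_or_mem_Ioo_of_mem_Icc ht with rfl | rfl | ht
  · rcases hc.eq_or_lt with rfl | hc
    · simp [D_of_nonpos]
    · simpa using D_succ_intCast_of_parity n hc hpar
  · have h := D_succ_intCast n (m := c + 1) (by omega)
    push_cast at h
    rw [h, add_sub_cancel_right]
    ring_nf
  · exact D_succ_add_of_mem_Ioo n hc hcn hpar ht

lemma D_succ_sub_eq_chordMean (n : ℕ) {c : ℤ} (hc : 2 ≤ c) (hcn : c ≤ n) (hpar : c % 2 = n % 2)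
    {t : ℝ} (ht : t ∈ Icc 0 1) : D (n + 1) (c - t) = chordMean (fun s => D n (c - s)) t := by
  simp only [chordMean, sub_zero]
  rcases eq_endpoints_or_mem_Ioo_of_mem_Icc ht with rfl | rfl | ht
  · simpa using D_succ_intCast_of_parity n (by omega) hpar
  · have h := D_succ_intCast n (m := c - 1) (by omega)
    push_cast at h
    rw [h, sub_add_cancel]
    ring_nf
  · exact D_succ_sub_of_mem_Ioo n hc hcn hpar ht

lemma D_succ_one_sub {n : ℕ} (hn : Odd n) {t : ℝ} (ht : t ∈ Icc 0 1) :
    D (n + 1) (1 - t) = D n 1 + t * (1 - D n 1) := by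
  rcases eq_endpoints_or_mem_Ioo_of_mem_Icc ht with rfl | rfl | ht
  · simpa using D_succ_intCast_of_parity n (m := 1) le_rfl (by obtain ⟨k, hk⟩ := hn; omega)
  · simp [D_of_nonpos]
  · exact D_succ_one_sub_of_mem_Ioo hn ht

/-- Continuity on the closed blocks is what yields the tangent condition of `IsChordProfile` for
the neighbours of `D n` in the next step. -/
def BlockRegular (n : ℕ) : Prop :=
  ∀ a : ℤ, 0 ≤ a → a + 2 ≤ n → a % 2 = n % 2 →
    ContinuousOn (D n) (Icc a (a + 2)) ∧ HasMonotoneContinuousDerivOn (D n) (Ioo a (a + 2))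

namespace BlockRegular

variable {n : ℕ}

lemma isChordProfile_add (h : BlockRegular n) {c : ℤ} (hc : 0 ≤ c) (hcn : c ≤ n)
    (hpar : c % 2 = n % 2) : IsChordProfile (fun s => D n (c + s)) := by
  by_cases hc2 : c + 2 ≤ n
  · obtain ⟨hcont, hderiv⟩ := h c hc hc2 hpar
    have hpre : ((c : ℝ) + ·) ⁻¹' Ioo (c : ℝ) (c + 2) = Ioo 0 2 := by simp
    exact .of_continuousOn (hpre ▸ hderiv.comp_const_add c)
      (hcont.comp (continuous_const_add _).continuousOn fun s hs =>
        ⟨by linarith [hs.1], by linarith [hs.2]⟩)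
  · obtain rfl : c = n := by omega
    refine .of_eqOn_zero (by simpa using D_natCast_self_nonneg n) fun s hs => ?_
    exact D_of_lt n (by push_cast; linarith [hs.1])

lemma isChordProfile_sub (h : BlockRegular n) {c : ℤ} (hc : 2 ≤ c) (hcn : c ≤ n)
    (hpar : c % 2 = n % 2) : IsChordProfile (fun s => D n (c - s)) := by
  obtain ⟨hcont, hderiv⟩ := h (c - 2) (by omega) (by omega) (by omega)
  push_cast at hcont hderiv
  rw [sub_add_cancel] at hcont hderiv
  have hpre : ((c : ℝ) - ·) ⁻¹' Ioo ((c : ℝ) - 2) c = Ioo 0 2 := by simp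
  exact .of_continuousOn (hpre ▸ hderiv.comp_const_sub c)
    (hcont.comp (continuous_sub_left _).continuousOn fun s hs =>
      ⟨by linarith [hs.2], by linarith [hs.1]⟩)

lemma exists_left_piece (h : BlockRegular n) {c : ℤ} (hc : 1 ≤ c) (hcn : c ≤ n)
    (hpar : c % 2 = n % 2) :
    ∃ ψ, IsConvexPiece ψ (D n (c - 1) - D n c) ∧ ∀ t ∈ Icc (0 : ℝ) 1, D (n + 1) (c - t) = ψ t := by
  rcases hc.eq_or_lt with rfl | hc
  · have hn : Odd n := Nat.odd_iff.2 (by omega)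
    refine ⟨_, ?_, fun t ht => by simpa using D_succ_one_sub hn ht⟩
    simpa [D_of_nonpos] using IsConvexPiece.affine (D n 1) (1 - D n 1)
  · refine ⟨_, ?_, fun t ht => D_succ_sub_eq_chordMean n hc hcn hpar ht⟩
    simpa using (h.isChordProfile_sub hc hcn hpar).isConvexPiece_chordMean

lemma succ (h : BlockRegular n) : BlockRegular (n + 1) := by
  intro a ha han hpar
  have hc : (a : ℝ) = ((a + 1 : ℤ) : ℝ) - 1 := by push_cast; ring
  have hc' : (a : ℝ) + 2 = ((a + 1 : ℤ) : ℝ) + 1 := by push_cast; ring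
  rw [hc', hc]
  have hpar' : (a + 1) % 2 = n % 2 := by push_cast at hpar; omega
  have hright := (h.isChordProfile_add (c := a + 1) (by omega) (by omega)
    hpar').isConvexPiece_chordMean
  obtain ⟨ψ, hψ, hfψ⟩ := h.exists_left_piece (c := a + 1) (by omega) (by omega) hpar'
  have hslope := two_mul_D_intCast n (m := a + 1) (by omega) hpar'
  refine IsConvexPiece.glue (d := D n ((a + 1 : ℤ) + 1) - D n ((a + 1 : ℤ) : ℝ))
    (by simpa using hright) (by convert hψ using 1; linarith)
    (fun t ht => D_succ_add_eq_chordMean n (by omega) (by omega) hpar' ht) hfψ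

end BlockRegular

theorem blockRegular (n : ℕ) : BlockRegular n := by
  induction n with
  | zero => intro a ha han; omega
  | succ n ih => exact ih.succ

theorem D_convexOn_and_contDiffOn_general (n : ℕ) :
    (∀ a : ℤ, 0 ≤ a → a + 2 ≤ (n : ℤ) → a % 2 = (n : ℤ) % 2 →
      ConvexOn ℝ (Set.Ioo (a : ℝ) ((a : ℝ) + 2)) (D n) ∧
      (∀ x ∈ Set.Ioo (a : ℝ) ((a : ℝ) + 2), DifferentiableAt ℝ (D n) x) ∧
      ContinuousOn (deriv (D n)) (Set.Ioo (a : ℝ) ((a : ℝ) + 2))) ∧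
    (Odd n →
      ConvexOn ℝ (Set.Ioo (0 : ℝ) 1) (D n) ∧
      (∀ x ∈ Set.Ioo (0 : ℝ) 1, DifferentiableAt ℝ (D n) x) ∧
      ContinuousOn (deriv (D n)) (Set.Ioo (0 : ℝ) 1)) := by
  have hconclude : ∀ {s : Set ℝ}, Convex ℝ s → IsOpen s → HasMonotoneContinuousDerivOn (D n) s →
      ConvexOn ℝ s (D n) ∧ (∀ x ∈ s, DifferentiableAt ℝ (D n) x) ∧ ContinuousOn (deriv (D n)) s :=
    fun hconv hs h => ⟨h.convexOn hconv hs, h.differentiableAt, h.continuousOn_deriv⟩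
  refine ⟨fun a ha han hpar => hconclude (convex_Ioo _ _) isOpen_Ioo
    (blockRegular n a ha han hpar).2, fun hodd => hconclude (convex_Ioo _ _) isOpen_Ioo ?_⟩
  obtain ⟨m, rfl⟩ : ∃ m, n = m + 1 := ⟨n - 1, by obtain ⟨k, hk⟩ := hodd; omega⟩
  have hpar : (0 : ℤ) % 2 = m % 2 := by obtain ⟨k, hk⟩ := hodd; omega
  have hpiece :=
    ((blockRegular m).isChordProfile_add le_rfl (by omega) hpar).isConvexPiece_chordMean
  simpa using (hpiece.right (c := 0) fun t ht => by
    simpa using D_succ_add_eq_chordMean m le_rfl (by omega) hpar ht).2.1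

/-- for `n ≥ 1`, the function `D n` is convex and continuously
differentiable on every interval `(a, a+2)` with `a ∈ ℤ`, `0 ≤ a`, `a + 2 ≤ n` and
`a ≡ n (mod 2)`, and, when `n` is odd, also on `(0, 1)`. -/
theorem D_convexOn_and_contDiffOn (n : ℕ) (hn : 1 ≤ n) :
    (∀ a : ℤ, 0 ≤ a → a + 2 ≤ (n : ℤ) → a % 2 = (n : ℤ) % 2 →
      ConvexOn ℝ (Set.Ioo (a : ℝ) ((a : ℝ) + 2)) (D n) ∧
      (∀ x ∈ Set.Ioo (a : ℝ) ((a : ℝ) + 2), DifferentiableAt ℝ (D n) x) ∧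
      ContinuousOn (deriv (D n)) (Set.Ioo (a : ℝ) ((a : ℝ) + 2))) ∧
    (Odd n →
      ConvexOn ℝ (Set.Ioo (0 : ℝ) 1) (D n) ∧
      (∀ x ∈ Set.Ioo (0 : ℝ) 1, DifferentiableAt ℝ (D n) x) ∧
      ContinuousOn (deriv (D n)) (Set.Ioo (0 : ℝ) 1)) :=
  D_convexOn_and_contDiffOn_general n
end
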